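/- arXiv:1512.04737 — 3 statements merged into one kernel-verified Lean document; each statement's English description precedes it below -/
import Mathlib

section
/- Let n ≥ 3, let f₁,…,fₙ : ℝ → ℝ be twice continuously differentiable, and suppose there are two distinct indices i ≠ j, nonzero constants γᵢ, γⱼ, λᵢ, λⱼ with fᵢ(t) = γᵢ e^{λᵢ t} and fⱼ(t) = γⱼ e^{λⱼ t}. Then the function f(x₁,…,xₙ) = f₁(x₁)·…·fₙ(xₙ) has identically vanishing Hessian determinant: det H(f)(x) = 0 for all x ∈ ℝⁿ where f is defined. -/
open Real Finset

/-- The partial derivative of `f : ℝⁿ → ℝ` in the `i`-th coordinate direction. -/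
noncomputable def pderiv' {n : ℕ} (f : (Fin n → ℝ) → ℝ) (i : Fin n) (x : Fin n → ℝ) : ℝ :=
  deriv (fun t => f (Function.update x i t)) (x i)

/-- The Hessian matrix of second-order partial derivatives of `f : ℝⁿ → ℝ`. -/
noncomputable def hessian {n : ℕ} (f : (Fin n → ℝ) → ℝ) (x : Fin n → ℝ) :
    Matrix (Fin n) (Fin n) ℝ :=
  Matrix.of fun i j => pderiv' (pderiv' f j) i x

/-!
If `f(x) = ∏ₖ Fₖ(xₖ)` and the factor `Fₐ` solves `Fₐ' = λ Fₐ`, then differentiating any first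
partial derivative `∂ₖ f` in the direction `xₐ` only differentiates the factor `Fₐ(xₐ)` (or
`Fₐ'(xₐ) = λ Fₐ(xₐ)`), so it multiplies by `λ`: row `a` of the Hessian is `λ ∇f`. Two exponential
factors therefore give two rows proportional to `∇f`, and the determinant vanishes.
-/

theorem Matrix.det_eq_zero_of_rows_eq_smul {m R : Type*} [Fintype m] [DecidableEq m]
    [CommRing R] [IsDomain R] {M : Matrix m m R} {i j : m} (hij : i ≠ j) {a b : R}
    {v : m → R} (hi : M i = a • v) (hj : M j = b • v) : M.det = 0 := by
  rcases eq_or_ne a 0 with rfl | ha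
  · exact Matrix.det_eq_zero_of_row_eq_zero i fun k => by simp [hi]
  refine (mul_eq_zero.1 ?_).resolve_left ha
  calc a * M.det = (M.updateRow j (a • M j)).det := by
        rw [Matrix.det_updateRow_smul, Matrix.updateRow_eq_self]
    _ = (M.updateRow j (b • M i)).det := by rw [hi, hj, smul_smul, smul_smul, mul_comm]
    _ = b * (M.updateRow j (M i)).det := Matrix.det_updateRow_smul _ _ _ _
    _ = 0 := by
        rw [Matrix.det_zero_of_row_eq hij (by rw [Matrix.updateRow_self,
          Matrix.updateRow_ne hij]), mul_zero]

section UpdateProd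

variable {ι α M : Type*} [DecidableEq ι] [CommMonoid M] (F : ι → α → M)

theorem prod_apply_update_of_notMem {s : Finset ι} {k : ι} (hk : k ∉ s) (x : ι → α) (t : α) :
    ∏ l ∈ s, F l (Function.update x k t l) = ∏ l ∈ s, F l (x l) :=
  prod_congr rfl fun l hl => by rw [Function.update_of_ne (ne_of_mem_of_not_mem hl hk)]

theorem prod_apply_update_of_mem {s : Finset ι} {k : ι} (hk : k ∈ s) (x : ι → α) (t : α) :
    ∏ l ∈ s, F l (Function.update x k t l) = F k t * ∏ l ∈ s.erase k, F l (x l) := by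
  rw [← mul_prod_erase s _ hk, Function.update_self,
    prod_apply_update_of_notMem F (notMem_erase k s)]

end UpdateProd

section ProductFunction

variable {n : ℕ} (F : Fin n → ℝ → ℝ)

theorem pderiv'_prod_apply (k : Fin n) (x : Fin n → ℝ) :
    pderiv' (fun y => ∏ l, F l (y l)) k x = deriv (F k) (x k) * ∏ l ∈ univ.erase k, F l (x l) := by
  -- No differentiability is needed: `deriv_mul_const_field` also holds for junk values.
  simp only [pderiv', prod_apply_update_of_mem F (mem_univ k), deriv_mul_const_field]

theorem hessian_prod_row_eq_smul {a : Fin n} {lam : ℝ}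
    (hFa : ∀ t, HasDerivAt (F a) (lam * F a t) t) (x : Fin n → ℝ) :
    hessian (fun y => ∏ l, F l (y l)) x a =
      lam • fun k => pderiv' (fun y => ∏ l, F l (y l)) k x := by
  ext k
  change deriv (fun t => pderiv' _ k (Function.update x a t)) (x a) = lam * pderiv' _ k x
  obtain ⟨c, hc⟩ : ∃ c, ∀ t,
      pderiv' (fun y => ∏ l, F l (y l)) k (Function.update x a t) = c * F a t := by
    simp only [pderiv'_prod_apply]
    rcases eq_or_ne k a with rfl | hka
    · refine ⟨lam * ∏ l ∈ univ.erase k, F l (x l), fun t => ?_⟩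
      rw [Function.update_self, (hFa t).deriv, prod_apply_update_of_notMem F (notMem_erase k _)]
      ring
    · refine ⟨deriv (F k) (x k) * ∏ l ∈ (univ.erase k).erase a, F l (x l), fun t => ?_⟩
      rw [Function.update_of_ne hka,
        prod_apply_update_of_mem F (mem_erase.2 ⟨hka.symm, mem_univ a⟩)]
      ring
  have hx := hc (x a)
  rw [Function.update_eq_self] at hx
  rw [funext hc, ((hFa (x a)).const_mul c).deriv, hx]
  ring

end ProductFunction

theorem hasDerivAt_of_eq_const_mul_exp {G : ℝ → ℝ} {γ lam : ℝ}
    (hG : ∀ t, G t = γ * exp (lam * t)) (t : ℝ) : HasDerivAt G (lam * G t) t := by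
  rw [funext hG]
  exact (((hasDerivAt_id' t).const_mul lam).exp.const_mul γ).congr_deriv (by ring)

theorem stmt_2_general (n : ℕ) (F : Fin n → ℝ → ℝ)
    (i j : Fin n) (hij : i ≠ j)
    (γi γj lami lamj : ℝ)
    (hFi : ∀ t, F i t = γi * Real.exp (lami * t))
    (hFj : ∀ t, F j t = γj * Real.exp (lamj * t))
    (f : (Fin n → ℝ) → ℝ)
    (hf : ∀ x, f x = ∏ k, F k (x k)) :
    ∀ x : Fin n → ℝ, (hessian f x).det = 0 := by
  obtain rfl : f = fun x => ∏ k, F k (x k) := funext hf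
  intro x
  exact Matrix.det_eq_zero_of_rows_eq_smul hij
    (hessian_prod_row_eq_smul F (hasDerivAt_of_eq_const_mul_exp hFi) x)
    (hessian_prod_row_eq_smul F (hasDerivAt_of_eq_const_mul_exp hFj) x)

/-- If two of the components of a homothetical function
`f(x₁,…,xₙ) = f₁(x₁)⋯fₙ(xₙ)` (with `n ≥ 3` and C² components) are exponentials
`γ e^{λ t}` with nonzero `γ, λ`, then the Hessian determinant of `f` vanishes
identically. -/
theorem stmt_2 (n : ℕ) (hn : 3 ≤ n) (F : Fin n → ℝ → ℝ)
    (hC2 : ∀ k, ContDiff ℝ 2 (F k))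
    (i j : Fin n) (hij : i ≠ j)
    (γi γj lami lamj : ℝ)
    (hγi : γi ≠ 0) (hγj : γj ≠ 0) (hlami : lami ≠ 0) (hlamj : lamj ≠ 0)
    (hFi : ∀ t, F i t = γi * Real.exp (lami * t))
    (hFj : ∀ t, F j t = γj * Real.exp (lamj * t))
    (f : (Fin n → ℝ) → ℝ)
    (hf : ∀ x, f x = ∏ k, F k (x k)) :
    ∀ x : Fin n → ℝ, (hessian f x).det = 0 :=
  stmt_2_general n F i j hij γi γj lami lamj hFi hFj f hf
end

section
/- Let n ≥ 3 and let f₁,…,fₙ : ℝ₊ → ℝ₊ be smooth nonvanishing functions with nonvanishing first derivatives such that at least one of the functions (f₁'/f₁)',…,(fₙ'/fₙ)' vanishes identically, and let f(x₁,…,xₙ) = f₁(x₁)·…·fₙ(xₙ) on ℝ₊ⁿ. Then the Hessian determinant of f vanishes identically on ℝ₊ⁿ if and only if the determinant of the bordered Hessian (Allen) matrix of f vanishes identically on ℝ₊ⁿ. -/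
open Real Finset

/-- The bordered Hessian (Allen) matrix of `f : ℝⁿ → ℝ`: the `(n+1)×(n+1)`
matrix whose first row and column are `(0, f_{x₁}, …, f_{xₙ})` and whose
remaining `n×n` block is the Hessian matrix. -/
noncomputable def borderedHessian {n : ℕ} (f : (Fin n → ℝ) → ℝ) (x : Fin n → ℝ) :
    Matrix (Fin (n + 1)) (Fin (n + 1)) ℝ :=
  Matrix.of fun i =>
    Fin.cases (motive := fun _ => Fin (n + 1) → ℝ)
      (Fin.cons 0 fun j => pderiv' f j x)
      (fun i' => Fin.cons (pderiv' f i' x) fun j => pderiv' (pderiv' f j) i' x) i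

section aux

open Matrix

private def finE' (n : ℕ) : Fin (n+1) ≃ Unit ⊕ Fin n where
  toFun := Fin.cases (Sum.inl ()) Sum.inr
  invFun := Sum.elim (fun _ => 0) Fin.succ
  left_inv := by intro p; induction p using Fin.cases <;> simp
  right_inv := by rintro (u | i) <;> simp

private lemma key_matrix {n : ℕ} (a d : Fin n → ℝ) (hd : ∏ i, d i = 0) :
    (Matrix.of fun i j => (if i = j then d i else 0) + a i * a j).det
      = - (Matrix.of (Fin.cases (motive := fun _ => Fin (n+1) → ℝ)
          (Fin.cons 0 a)
          (fun i => Fin.cons (a i)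
            (fun j => (if i = j then d i else 0) + a i * a j)))).det := by
  set Dg : Matrix (Fin n) (Fin n) ℝ := Matrix.diagonal d with hDg
  set M : Matrix (Fin n) (Fin n) ℝ := Dg + replicateCol Unit a * replicateRow Unit a with hM
  have hMapp : ∀ i j, M i j = (if i = j then d i else 0) + a i * a j := by
    intro i j
    simp [hM, hDg, Matrix.add_apply, Matrix.mul_apply, Matrix.diagonal_apply, replicateCol, replicateRow]
  set E : Matrix (Unit ⊕ Fin n) (Unit ⊕ Fin n) ℝ := fromBlocks 1 0 (replicateCol Unit a) 1 with hE
  set C' : Matrix (Unit ⊕ Fin n) (Unit ⊕ Fin n) ℝ :=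
    fromBlocks 1 (replicateRow Unit a) (-(replicateCol Unit a)) Dg with hC'
  set B'' : Matrix (Unit ⊕ Fin n) (Unit ⊕ Fin n) ℝ :=
    fromBlocks 0 (replicateRow Unit a) (replicateCol Unit a) Dg with hB''
  have hdetE : E.det = 1 := by
    rw [hE, det_fromBlocks_zero₁₂]; simp
  have h1 : E * C' = fromBlocks 1 (replicateRow Unit a) 0 M := by
    rw [hE, hC', fromBlocks_multiply]
    simp [hM, add_comm]
  have h2 : E * B'' = fromBlocks 0 (replicateRow Unit a) (replicateCol Unit a) M := by
    rw [hE, hB'', fromBlocks_multiply]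
    simp [hM, add_comm]
  have hdetM : M.det = C'.det := by
    have := congrArg Matrix.det h1
    rw [det_mul, hdetE, one_mul, det_fromBlocks_zero₂₁] at this
    simpa using this.symm
  have hdetB : (fromBlocks 0 (replicateRow Unit a) (replicateCol Unit a) M).det = B''.det := by
    have := congrArg Matrix.det h2
    rw [det_mul, hdetE, one_mul] at this
    exact this.symm
  have hadd : C'.det + B''.det = 0 := by
    have hcol : C' = (C'.updateCol (Sum.inl ()) (fun p => C' p (Sum.inl ()))) := by
      rw [Matrix.updateCol_eq_self]
    have hBcol : B'' = (C'.updateCol (Sum.inl ()) (fun p => B'' p (Sum.inl ()))) := by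
      ext p q
      rcases eq_or_ne q (Sum.inl ()) with rfl | hq
      · simp [Matrix.updateCol_self]
      · rw [Matrix.updateCol_ne hq]
        rcases q with v | j
        · exact absurd rfl hq
        · rcases p with u | i <;> simp [hC', hB'', fromBlocks]
    have hT : (C'.updateCol (Sum.inl ())
        ((fun p => C' p (Sum.inl ())) + (fun p => B'' p (Sum.inl ()))))
        = fromBlocks 1 (replicateRow Unit a) 0 Dg := by
      ext p q
      rcases eq_or_ne q (Sum.inl ()) with rfl | hq
      · rcases p with u | i <;> simp [hC', hB'', fromBlocks, Matrix.updateCol_self]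
      · rw [Matrix.updateCol_ne hq]
        rcases q with v | j
        · exact absurd rfl hq
        · rcases p with u | i <;> simp [hC', fromBlocks]
    have := Matrix.det_updateCol_add C' (Sum.inl ())
      (fun p => C' p (Sum.inl ())) (fun p => B'' p (Sum.inl ()))
    rw [hT] at this
    rw [det_fromBlocks_zero₂₁] at this
    rw [← hcol, ← hBcol] at this
    rw [hDg, det_diagonal, hd] at this
    simpa using this.symm
  have hB : (Matrix.of (Fin.cases (motive := fun _ => Fin (n+1) → ℝ)
          (Fin.cons 0 a)
          (fun i => Fin.cons (a i)
            (fun j => (if i = j then d i else 0) + a i * a j))))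
      = (fromBlocks 0 (replicateRow Unit a) (replicateCol Unit a) M).submatrix (finE' n) (finE' n) := by
    ext p q
    induction p using Fin.cases with
    | zero =>
      induction q using Fin.cases with
      | zero => simp [finE', fromBlocks]
      | succ j => simp [finE', fromBlocks, replicateRow]
    | succ i =>
      induction q using Fin.cases with
      | zero => simp [finE', fromBlocks, replicateCol]
      | succ j => simp [finE', fromBlocks, hMapp]
  have hMeq : (Matrix.of fun i j => (if i = j then d i else 0) + a i * a j) = M := by
    ext i j; rw [hMapp]; rfl
  rw [hMeq, hB, Matrix.det_submatrix_equiv_self, hdetB, hdetM]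
  linarith

variable {n : ℕ} (F : Fin n → ℝ → ℝ) (f : (Fin n → ℝ) → ℝ)

private lemma pd1 (hf : ∀ x : Fin n → ℝ, (∀ i, 0 < x i) → f x = ∏ i, F i (x i))
    (j : Fin n) (x : Fin n → ℝ) (hx : ∀ i, 0 < x i) :
    pderiv' f j x = (∏ i ∈ univ.erase j, F i (x i)) * deriv (F j) (x j) := by
  have hmem : Set.Ioi (0:ℝ) ∈ nhds (x j) := isOpen_Ioi.mem_nhds (hx j)
  have hev : (fun t => f (Function.update x j t)) =ᶠ[nhds (x j)]
      (fun t => (∏ i ∈ univ.erase j, F i (x i)) * F j t) := by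
    filter_upwards [hmem] with t ht
    have hpos' : ∀ i, 0 < Function.update x j t i := by
      intro i
      rcases eq_or_ne i j with rfl | h
      · simpa using ht
      · rw [Function.update_of_ne h]; exact hx i
    rw [hf _ hpos', ← Finset.mul_prod_erase univ _ (mem_univ j), Function.update_self, mul_comm]
    congr 1
    refine Finset.prod_congr rfl fun i hi => ?_
    rw [Function.update_of_ne (Finset.ne_of_mem_erase hi)]
  show deriv (fun t => f (Function.update x j t)) (x j) = _
  rw [hev.deriv_eq, deriv_const_mul_field]

private lemma pd2 (hf : ∀ x : Fin n → ℝ, (∀ i, 0 < x i) → f x = ∏ i, F i (x i))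
    (i j : Fin n) (x : Fin n → ℝ) (hx : ∀ i, 0 < x i) :
    pderiv' (pderiv' f j) i x =
      if i = j then (∏ k ∈ univ.erase j, F k (x k)) * deriv (deriv (F j)) (x j)
      else (∏ k ∈ (univ.erase j).erase i, F k (x k)) *
        (deriv (F j) (x j) * deriv (F i) (x i)) := by
  have hmem : Set.Ioi (0:ℝ) ∈ nhds (x i) := isOpen_Ioi.mem_nhds (hx i)
  have hupd : ∀ t > (0:ℝ), ∀ k, 0 < Function.update x i t k := by
    intro t ht k
    rcases eq_or_ne k i with rfl | h
    · simpa using ht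
    · rw [Function.update_of_ne h]; exact hx k
  rcases eq_or_ne i j with rfl | hij
  · rw [if_pos rfl]
    have hev : (fun t => pderiv' f i (Function.update x i t)) =ᶠ[nhds (x i)]
        (fun t => (∏ k ∈ univ.erase i, F k (x k)) * deriv (F i) t) := by
      filter_upwards [hmem] with t ht
      rw [pd1 F f hf i _ (hupd t ht), Function.update_self]
      congr 1
      refine Finset.prod_congr rfl fun k hk => ?_
      rw [Function.update_of_ne (Finset.ne_of_mem_erase hk)]
    show deriv (fun t => pderiv' f i (Function.update x i t)) (x i) = _
    rw [hev.deriv_eq, deriv_const_mul_field]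
  · rw [if_neg hij]
    have himem : i ∈ univ.erase j := Finset.mem_erase.2 ⟨hij, mem_univ i⟩
    have hev : (fun t => pderiv' f j (Function.update x i t)) =ᶠ[nhds (x i)]
        (fun t => ((∏ k ∈ (univ.erase j).erase i, F k (x k)) * deriv (F j) (x j)) * F i t) := by
      filter_upwards [hmem] with t ht
      rw [pd1 F f hf j _ (hupd t ht), Function.update_of_ne (Ne.symm hij)]
      rw [← Finset.mul_prod_erase (univ.erase j) _ himem, Function.update_self]
      have : ∏ k ∈ (univ.erase j).erase i, F k (Function.update x i t k)
          = ∏ k ∈ (univ.erase j).erase i, F k (x k) := by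
        refine Finset.prod_congr rfl fun k hk => ?_
        rw [Function.update_of_ne (Finset.ne_of_mem_erase hk)]
      rw [this]; ring
    show deriv (fun t => pderiv' f j (Function.update x i t)) (x i) = _
    rw [hev.deriv_eq, deriv_const_mul_field]
    ring

end aux

/-- Corollary 4.2: for a homothetical function `f = f₁(x₁)⋯fₙ(xₙ)` on `ℝ₊ⁿ`
(`n ≥ 3`, smooth positive components with nonvanishing first derivatives)
such that at least one `(fᵢ'/fᵢ)'` vanishes identically, the Hessian
determinant of `f` vanishes identically on `ℝ₊ⁿ` iff the Allen (bordered
Hessian) determinant of `f` vanishes identically on `ℝ₊ⁿ`. -/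
theorem stmt_6 (n : ℕ) (hn : 3 ≤ n) (F : Fin n → ℝ → ℝ)
    (hsm : ∀ i, ContDiffOn ℝ (⊤ : ℕ∞) (F i) (Set.Ioi 0))
    (hpos : ∀ i, ∀ t > (0 : ℝ), 0 < F i t)
    (hde : ∀ i, ∀ t > (0 : ℝ), deriv (F i) t ≠ 0)
    (hlog : ∃ i, ∀ t > (0 : ℝ), deriv (fun s => deriv (F i) s / F i s) t = 0)
    (f : (Fin n → ℝ) → ℝ)
    (hf : ∀ x : Fin n → ℝ, (∀ i, 0 < x i) → f x = ∏ i, F i (x i)) :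
    (∀ x : Fin n → ℝ, (∀ i, 0 < x i) → (hessian f x).det = 0) ↔
      (∀ x : Fin n → ℝ, (∀ i, 0 < x i) → (borderedHessian f x).det = 0) := by
  have key : ∀ x : Fin n → ℝ, (∀ i, 0 < x i) →
      (borderedHessian f x).det = -(∏ i, F i (x i)) * (hessian f x).det := by
    intro x hx
    set P : ℝ := ∏ i, F i (x i) with hP
    have hFpos : ∀ i, 0 < F i (x i) := fun i => hpos i (x i) (hx i)
    have hFne : ∀ i, F i (x i) ≠ 0 := fun i => (hFpos i).ne'
    set a : Fin n → ℝ := fun i => deriv (F i) (x i) / F i (x i) with ha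
    set d : Fin n → ℝ := fun i =>
      deriv (deriv (F i)) (x i) / F i (x i) - a i * a i with hd
    -- entries
    have entry1 : ∀ j, pderiv' f j x = P * a j := by
      intro j
      rw [pd1 F f hf j x hx, hP, ha, ← Finset.mul_prod_erase univ _ (mem_univ j)]
      field_simp [hFne j]
    have entry2 : ∀ i j, pderiv' (pderiv' f j) i x =
        P * ((if i = j then d i else 0) + a i * a j) := by
      intro i j
      rw [pd2 F f hf i j x hx]
      rcases eq_or_ne i j with rfl | hij
      · rw [if_pos rfl, if_pos rfl, hd]
        have hPe : P = F i (x i) * ∏ k ∈ univ.erase i, F k (x k) := by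
          rw [hP]; exact (Finset.mul_prod_erase univ _ (mem_univ i)).symm
        rw [hPe]
        field_simp [hFne i]
        ring
      · rw [if_neg hij, if_neg hij]
        have hij' : i ∈ univ.erase j := Finset.mem_erase.2 ⟨hij, mem_univ i⟩
        have hPe : P = F j (x j) * (F i (x i) * ∏ k ∈ (univ.erase j).erase i, F k (x k)) := by
          rw [hP, ← Finset.mul_prod_erase univ _ (mem_univ j),
            ← Finset.mul_prod_erase (univ.erase j) _ hij']
        rw [hPe, ha]
        field_simp [hFne i, hFne j]
        ring
    have hH : hessian f x = P • Matrix.of (fun i j => (if i = j then d i else 0) + a i * a j) := by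
      ext i j
      simp only [hessian, Matrix.of_apply, Matrix.smul_apply, smul_eq_mul]
      exact entry2 i j
    have hB : borderedHessian f x = P • Matrix.of (Fin.cases (motive := fun _ => Fin (n+1) → ℝ)
          (Fin.cons 0 a)
          (fun i => Fin.cons (a i)
            (fun j => (if i = j then d i else 0) + a i * a j))) := by
      ext p q
      simp only [Matrix.smul_apply, smul_eq_mul]
      induction p using Fin.cases with
      | zero =>
        induction q using Fin.cases with
        | zero => simp [borderedHessian]
        | succ j => simp only [borderedHessian, Matrix.of_apply, Fin.cases_zero,
            Fin.cons_succ]; exact entry1 j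
      | succ i =>
        induction q using Fin.cases with
        | zero => simp only [borderedHessian, Matrix.of_apply, Fin.cases_succ,
            Fin.cons_zero]; exact entry1 i
        | succ j => simp only [borderedHessian, Matrix.of_apply, Fin.cases_succ,
            Fin.cons_succ]; exact entry2 i j
    -- the logarithmic-derivative hypothesis gives ∏ d = 0
    have hprod : ∏ i, d i = 0 := by
      obtain ⟨i₀, hi₀⟩ := hlog
      have hdi : d i₀ = 0 := by
        have hxmem : x i₀ ∈ Set.Ioi (0:ℝ) := hx i₀
        have hcF : ContDiffAt ℝ (⊤ : ℕ∞) (F i₀) (x i₀) :=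
          (hsm i₀).contDiffAt (isOpen_Ioi.mem_nhds hxmem)
        have hdF : DifferentiableAt ℝ (F i₀) (x i₀) := hcF.differentiableAt (by simp)
        have hcF' : ContDiffOn ℝ (⊤ : ℕ∞) (deriv (F i₀)) (Set.Ioi 0) := by
          exact (hsm i₀).deriv_of_isOpen isOpen_Ioi (by simp)
        have hdF' : DifferentiableAt ℝ (deriv (F i₀)) (x i₀) :=
          (hcF'.contDiffAt (isOpen_Ioi.mem_nhds hxmem)).differentiableAt (by simp)
        have hder : deriv (fun s => deriv (F i₀) s / F i₀ s) (x i₀) = _ := deriv_div hdF' hdF (hFne i₀)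
        rw [hi₀ (x i₀) (hx i₀)] at hder
        have h0 : deriv (deriv (F i₀)) (x i₀) * F i₀ (x i₀)
            - deriv (F i₀) (x i₀) * deriv (F i₀) (x i₀) = 0 := by
          have hne : (F i₀ (x i₀)) ^ 2 ≠ 0 := pow_ne_zero 2 (hFne i₀)
          rcases div_eq_zero_iff.mp hder.symm with h | h
          · exact h
          · exact absurd h hne
        have hF2 : deriv (F i₀) (x i₀) * deriv (F i₀) (x i₀)
            = deriv (deriv (F i₀)) (x i₀) * F i₀ (x i₀) := by linarith
        simp only [hd, ha]
        rw [div_mul_div_comm, hF2, mul_div_mul_right _ _ (hFne i₀), sub_self]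
      exact Finset.prod_eq_zero (mem_univ i₀) hdi
    have hk := key_matrix a d hprod
    rw [hH, hB, Matrix.det_smul, Matrix.det_smul, Fintype.card_fin, Fintype.card_fin, hk]
    ring
  have hPne : ∀ x : Fin n → ℝ, (∀ i, 0 < x i) → (∏ i, F i (x i)) ≠ 0 := by
    intro x hx
    exact (Finset.prod_pos fun i _ => hpos i (x i) (hx i)).ne'
  constructor
  · intro h x hx
    rw [key x hx, h x hx, mul_zero]
  · intro h x hx
    have := h x hx
    rw [key x hx] at this
    rcases mul_eq_zero.1 this with h0 | h0
    · exact absurd (neg_eq_zero.1 h0) (hPne x hx)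
    · exact h0
end

section
/- Let n ≥ 2, let F : ℝ₊ → ℝ₊ be twice differentiable with F' ≠ 0, let α₁,…,αₙ be nonzero constants, and define f(x₁,…,xₙ) = F(x₁^{α₁}·…·xₙ^{αₙ}) on ℝ₊ⁿ. Then for every x ∈ ℝ₊ⁿ at which the denominator in the definition of H_{ij} is nonzero and all 1 ≤ i ≠ j ≤ n, the Hicks elasticity of substitution satisfies H_{ij}(x) = 1; i.e. the homothetic generalized Cobb–Douglas production function has constant Hicks elasticity of substitution equal to 1. -/
/-!
Write `u = x₁^{α₁}⋯xₙ^{αₙ}`. Moving along the `i`-th coordinate, `u` has derivative `αᵢ u / xᵢ`,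
so `xᵢ f_{xᵢ} = αᵢ u F'(u)` and
`f_{xᵢxⱼ} = (αᵢ αⱼ u (u F''(u) + F'(u)) - δᵢⱼ αⱼ u F'(u)) / (xᵢ xⱼ)`.
In the denominator of `H_{ij}` the `F''` terms cancel, and both numerator and denominator equal
`-(1/αᵢ + 1/αⱼ) / (u F'(u))`. Partial derivatives only see `f` near `x`, so `f` may be replaced by
`F ∘ u` on the open positive orthant.
-/

open Real Finset

/-- The denominator in the definition of the Hicks elasticity of substitution. -/
noncomputable def hicksDenom {n : ℕ} (f : (Fin n → ℝ) → ℝ) (i j : Fin n)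
    (x : Fin n → ℝ) : ℝ :=
  pderiv' (pderiv' f i) i x / (pderiv' f i x) ^ 2
    - 2 * pderiv' (pderiv' f j) i x / (pderiv' f i x * pderiv' f j x)
    + pderiv' (pderiv' f j) j x / (pderiv' f j x) ^ 2

/-- The Hicks elasticity of substitution of the `i`-th production variable
with respect to the `j`-th one. -/
noncomputable def hicks {n : ℕ} (f : (Fin n → ℝ) → ℝ) (i j : Fin n)
    (x : Fin n → ℝ) : ℝ :=
  -(1 / (x i * pderiv' f i x) + 1 / (x j * pderiv' f j x)) / hicksDenom f i j x

noncomputable def cobbDouglas {n : ℕ} (α x : Fin n → ℝ) : ℝ :=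
  ∏ k, x k ^ α k

section

variable {n : ℕ} {α x : Fin n → ℝ} {i j : Fin n}

section EqOn

variable {h h' : (Fin n → ℝ) → ℝ} {U : Set (Fin n → ℝ)}

theorem Set.EqOn.pderiv' (hh : Set.EqOn h h' U) (hU : IsOpen U) (i : Fin n) :
    Set.EqOn (_root_.pderiv' h i) (_root_.pderiv' h' i) U := by
  intro x hx
  apply Filter.EventuallyEq.deriv_eq
  have hline : Continuous (Function.update x i) := continuous_const.update i continuous_id
  filter_upwards [hline.continuousAt.preimage_mem_nhds (by simpa using hU.mem_nhds hx)]
    with t ht using hh ht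

theorem Set.EqOn.hicksDenom (hh : Set.EqOn h h' U) (hU : IsOpen U) (i j : Fin n) :
    Set.EqOn (_root_.hicksDenom h i j) (_root_.hicksDenom h' i j) U := by
  intro x hx
  simp only [_root_.hicksDenom, hh.pderiv' hU i hx, hh.pderiv' hU j hx,
    (hh.pderiv' hU i).pderiv' hU i hx, (hh.pderiv' hU j).pderiv' hU i hx,
    (hh.pderiv' hU j).pderiv' hU j hx]

theorem Set.EqOn.hicks (hh : Set.EqOn h h' U) (hU : IsOpen U) (i j : Fin n) :
    Set.EqOn (_root_.hicks h i j) (_root_.hicks h' i j) U := by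
  intro x hx
  simp only [_root_.hicks, hh.pderiv' hU i hx, hh.pderiv' hU j hx, hh.hicksDenom hU i j hx]

end EqOn

theorem isOpen_positiveOrthant : IsOpen {y : Fin n → ℝ | ∀ k, 0 < y k} := by
  simpa [Set.pi] using
    isOpen_set_pi (s := fun _ => Set.Ioi (0 : ℝ)) Set.finite_univ fun _ _ => isOpen_Ioi

theorem cobbDouglas_update (α x : Fin n → ℝ) (i : Fin n) (t : ℝ) :
    cobbDouglas α (Function.update x i t) = t ^ α i * ∏ k ∈ univ.erase i, x k ^ α k := by
  rw [cobbDouglas, ← mul_prod_erase univ _ (mem_univ i), Function.update_self]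
  congr 1
  exact prod_congr rfl fun k hk => by rw [Function.update_of_ne (ne_of_mem_erase hk)]

theorem hasDerivAt_cobbDouglas_update (hx : x i ≠ 0) :
    HasDerivAt (fun t => cobbDouglas α (Function.update x i t))
      (α i * cobbDouglas α x / x i) (x i) := by
  have hx' : cobbDouglas α x = x i ^ α i * ∏ k ∈ univ.erase i, x k ^ α k := by
    simpa using cobbDouglas_update α x i (x i)
  simp only [cobbDouglas_update]
  refine ((hasDerivAt_rpow_const (Or.inl hx)).mul_const _).congr_deriv ?_
  rw [hx', rpow_sub_one hx]
  ring

theorem pderiv'_comp_cobbDouglas {g : ℝ → ℝ} (hg : DifferentiableAt ℝ g (cobbDouglas α x))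
    (hx : x i ≠ 0) :
    pderiv' (fun y => g (cobbDouglas α y)) i x
      = deriv g (cobbDouglas α x) * (α i * cobbDouglas α x / x i) :=
  (hg.hasDerivAt.comp_of_eq (x i) (hasDerivAt_cobbDouglas_update hx) (by simp)).deriv

theorem pderiv'_comp_cobbDouglas_div_apply {g : ℝ → ℝ}
    (hg : DifferentiableAt ℝ g (cobbDouglas α x)) (hxi : x i ≠ 0) (hxj : x j ≠ 0) :
    pderiv' (fun y => g (cobbDouglas α y) / y j) i x
      = (deriv g (cobbDouglas α x) * (α i * cobbDouglas α x / x i) * x j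
          - g (cobbDouglas α x) * (Pi.single i 1 : Fin n → ℝ) j) / x j ^ 2 := by
  have hcoord :
      HasDerivAt (fun t => Function.update x i t j) ((Pi.single i 1 : Fin n → ℝ) j) (x i) :=
    hasDerivAt_pi.1 (hasDerivAt_update x i (x i)) j
  have hline := (hg.hasDerivAt.comp_of_eq (x i) (hasDerivAt_cobbDouglas_update (α := α) hxi)
    (by simp)).div hcoord (by simpa)
  simp only [Function.comp_apply, Function.update_eq_self] at hline
  exact hline.deriv

theorem cobbDouglas_pos (α : Fin n → ℝ) (hx : ∀ k, 0 < x k) : 0 < cobbDouglas α x :=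
  prod_pos fun k _ => rpow_pos_of_pos (hx k) _

variable {F : ℝ → ℝ}

theorem pderiv'_comp_cobbDouglas_eqOn (hF : ∀ u > 0, DifferentiableAt ℝ F u) (j : Fin n) :
    Set.EqOn (pderiv' (fun y => F (cobbDouglas α y)) j)
      (fun y => α j * (cobbDouglas α y * deriv F (cobbDouglas α y)) / y j)
      {y | ∀ k, 0 < y k} := by
  intro y hy
  rw [pderiv'_comp_cobbDouglas (hF _ (cobbDouglas_pos α hy)) (hy j).ne']
  ring

theorem pderiv'_pderiv'_comp_cobbDouglas (hF1 : ∀ u > 0, DifferentiableAt ℝ F u)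
    (hF2 : ∀ u > 0, DifferentiableAt ℝ (deriv F) u) (hx : ∀ k, 0 < x k) :
    pderiv' (pderiv' (fun y => F (cobbDouglas α y)) j) i x
      = (α i * α j * cobbDouglas α x
            * (cobbDouglas α x * deriv (deriv F) (cobbDouglas α x) + deriv F (cobbDouglas α x))
          - α j * cobbDouglas α x * deriv F (cobbDouglas α x) * (Pi.single i 1 : Fin n → ℝ) j)
        / (x i * x j) := by
  have hG : HasDerivAt (fun u => α j * (u * deriv F u)) _ (cobbDouglas α x) :=
    ((hasDerivAt_id' _).mul (hF2 _ (cobbDouglas_pos α hx)).hasDerivAt).const_mul (α j)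
  rw [(pderiv'_comp_cobbDouglas_eqOn hF1 j).pderiv' isOpen_positiveOrthant i hx,
    pderiv'_comp_cobbDouglas_div_apply hG.differentiableAt (hx i).ne' (hx j).ne', hG.deriv]
  have hδ : x i * (Pi.single i 1 : Fin n → ℝ) j = x j * (Pi.single i 1 : Fin n → ℝ) j := by
    rcases eq_or_ne j i with rfl | hji <;> simp [*]
  have hxi := (hx i).ne'
  have hxj := (hx j).ne'
  field_simp
  linear_combination (-(α j * cobbDouglas α x * deriv F (cobbDouglas α x))) * hδ

theorem hicks_comp_cobbDouglas (hF1 : ∀ u > 0, DifferentiableAt ℝ F u)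
    (hF2 : ∀ u > 0, DifferentiableAt ℝ (deriv F) u) (hF' : deriv F (cobbDouglas α x) ≠ 0)
    (hαi : α i ≠ 0) (hαj : α j ≠ 0) (hx : ∀ k, 0 < x k) (hij : i ≠ j)
    (hD : hicksDenom (fun y => F (cobbDouglas α y)) i j x ≠ 0) :
    hicks (fun y => F (cobbDouglas α y)) i j x = 1 := by
  have hu := cobbDouglas_pos α hx
  rw [hicks, div_eq_one_iff_eq hD, hicksDenom,
    pderiv'_comp_cobbDouglas (hF1 _ hu) (hx i).ne', pderiv'_comp_cobbDouglas (hF1 _ hu) (hx j).ne',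
    pderiv'_pderiv'_comp_cobbDouglas hF1 hF2 hx, pderiv'_pderiv'_comp_cobbDouglas hF1 hF2 hx,
    pderiv'_pderiv'_comp_cobbDouglas hF1 hF2 hx, Pi.single_eq_same, Pi.single_eq_same,
    Pi.single_eq_of_ne hij.symm]
  have hxi := (hx i).ne'
  have hxj := (hx j).ne'
  have hu' := hu.ne'
  field_simp
  ring

end

theorem stmt_18_general (n : ℕ) (F : ℝ → ℝ)
    (hF1 : ∀ u > (0 : ℝ), DifferentiableAt ℝ F u)
    (hF2 : ∀ u > (0 : ℝ), DifferentiableAt ℝ (deriv F) u)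
    (hF' : ∀ u > (0 : ℝ), deriv F u ≠ 0)
    (α : Fin n → ℝ) (hα : ∀ i, α i ≠ 0)
    (f : (Fin n → ℝ) → ℝ)
    (hf : ∀ x : Fin n → ℝ, (∀ i, 0 < x i) → f x = F (∏ i, (x i) ^ (α i))) :
    ∀ x : Fin n → ℝ, (∀ i, 0 < x i) → ∀ i j : Fin n, i ≠ j →
      hicksDenom f i j x ≠ 0 → hicks f i j x = 1 := by
  intro x hx i j hij hD
  have hfF : Set.EqOn f (fun y => F (cobbDouglas α y)) {y | ∀ k, 0 < y k} := fun y hy => hf y hy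
  rw [hfF.hicksDenom isOpen_positiveOrthant i j hx] at hD
  rw [hfF.hicks isOpen_positiveOrthant i j hx]
  exact hicks_comp_cobbDouglas hF1 hF2 (hF' _ (cobbDouglas_pos α hx)) (hα i) (hα j) hx hij hD

/-- The homothetic generalized Cobb–Douglas production function
`f = F(x₁^{α₁}⋯xₙ^{αₙ})` has constant Hicks elasticity of substitution
equal to `1` wherever the denominator in `H_{ij}` is nonzero. -/
theorem stmt_18 (n : ℕ) (hn : 2 ≤ n) (F : ℝ → ℝ)
    (hFpos : ∀ u > (0 : ℝ), 0 < F u)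
    (hF1 : ∀ u > (0 : ℝ), DifferentiableAt ℝ F u)
    (hF2 : ∀ u > (0 : ℝ), DifferentiableAt ℝ (deriv F) u)
    (hF' : ∀ u > (0 : ℝ), deriv F u ≠ 0)
    (α : Fin n → ℝ) (hα : ∀ i, α i ≠ 0)
    (f : (Fin n → ℝ) → ℝ)
    (hf : ∀ x : Fin n → ℝ, (∀ i, 0 < x i) → f x = F (∏ i, (x i) ^ (α i))) :
    ∀ x : Fin n → ℝ, (∀ i, 0 < x i) → ∀ i j : Fin n, i ≠ j →
      hicksDenom f i j x ≠ 0 → hicks f i j x = 1 :=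
  stmt_18_general n F hF1 hF2 hF' α hα f hf
end
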